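/- arXiv:1901.07060 — 5 statements merged into one kernel-verified Lean document; each statement's English description precedes it below -/
import Mathlib

section
/- If f : ℝ₊ → ℝ₊ and g : ℝ₊ → ℝ₊ satisfy ess-lim_{x→∞} f(tx)/f(x) = g(t) for all t > 0, then g is multiplicative: g(st) = g(s)g(t) for all s, t > 0. -/
def EssLim (f : ℝ → ℝ) (L : ℝ) : Prop :=
  ∀ ε > 0, ∃ X : ℝ, ∃ M : Set ℝ, IsMeagre M ∧ ∀ x > X, x ∉ M → |f x - L| < ε

lemma meagre_union {s t : Set ℝ} (hs : IsMeagre s) (ht : IsMeagre t) :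
    IsMeagre (s ∪ t) := by
  rw [IsMeagre, Set.compl_union]
  exact Filter.inter_mem hs ht

theorem quasiRV_multiplicative (f g : ℝ → ℝ)
    (hfpos : ∀ x > (0:ℝ), 0 < f x) (hgpos : ∀ t > (0:ℝ), 0 < g t)
    (hlim : ∀ t > (0:ℝ), EssLim (fun x => f (t * x) / f x) (g t)) :
    ∀ s > (0:ℝ), ∀ t > (0:ℝ), g (s * t) = g s * g t := by
  intro s hs t ht
  have key : ∀ ε > (0:ℝ), |g (s * t) - g s * g t| ≤ ε := by
    intro ε hε
    set δ : ℝ := min 1 (ε / (3 + g s + g t)) with hδdef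
    have hden : (0:ℝ) < 3 + g s + g t := by
      have := hgpos s hs; have := hgpos t ht; linarith
    have hδ : 0 < δ := lt_min one_pos (div_pos hε hden)
    have hδ1 : δ ≤ 1 := min_le_left _ _
    have hδ2 : δ ≤ ε / (3 + g s + g t) := min_le_right _ _
    obtain ⟨X₁, M₁, hM₁, h₁⟩ := hlim (s * t) (mul_pos hs ht) δ hδ
    obtain ⟨X₂, M₂, hM₂, h₂⟩ := hlim t ht δ hδ
    obtain ⟨X₃, M₃, hM₃, h₃⟩ := hlim s hs δ hδ
    -- preimage of M₃ under x ↦ t * x is meagre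
    have hMul : IsMeagre ((fun x : ℝ => t * x) ⁻¹' M₃) := by
      refine hM₃.preimage_of_isOpenMap (by continuity) ?_
      have : IsOpenMap (fun x : ℝ => t * x) :=
        (Homeomorph.mulLeft₀ t (ne_of_gt ht)).isOpenMap
      exact this
    have hM : IsMeagre (M₁ ∪ M₂ ∪ (fun x : ℝ => t * x) ⁻¹' M₃) :=
      meagre_union (meagre_union hM₁ hM₂) hMul
    have hdense : Dense (M₁ ∪ M₂ ∪ (fun x : ℝ => t * x) ⁻¹' M₃)ᶜ :=
      dense_of_mem_residual hM
    set X : ℝ := max 0 (max X₁ (max X₂ (X₃ / t))) with hX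
    obtain ⟨x, hxo, hxc⟩ := hdense.exists_mem_open isOpen_Ioi
      (Set.nonempty_Ioi (a := X))
    simp only [Set.mem_compl_iff, Set.mem_union, Set.mem_preimage, not_or] at hxo
    obtain ⟨⟨hx1, hx2⟩, hx3⟩ := hxo
    have hxX : X < x := hxc
    have hx0 : 0 < x := lt_of_le_of_lt (le_max_left _ _) hxX
    have hxX₁ : X₁ < x := lt_of_le_of_lt ((le_max_left _ _).trans (le_max_right _ _)) hxX
    have hxX₂ : X₂ < x := lt_of_le_of_lt
      (((le_max_left _ _).trans (le_max_right _ _)).trans (le_max_right _ _)) hxX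
    have hxX₃ : X₃ < t * x := by
      have h : X₃ / t < x := lt_of_le_of_lt
        (((le_max_right _ _).trans (le_max_right _ _)).trans (le_max_right _ _)) hxX
      calc X₃ = t * (X₃ / t) := by field_simp
        _ < t * x := by exact (mul_lt_mul_iff_right₀ ht).mpr h
    have hA := h₁ x hxX₁ hx1
    have hB := h₂ x hxX₂ hx2
    have hC := h₃ (t * x) hxX₃ hx3
    simp only at hA hB hC
    have hfx : 0 < f x := hfpos x hx0
    have hftx : 0 < f (t * x) := hfpos _ (mul_pos ht hx0)
    have hfactor : f (s * t * x) / f x = (f (s * (t * x)) / f (t * x)) * (f (t * x) / f x) := by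
      rw [← mul_assoc]
      field_simp
    set A := f (s * t * x) / f x
    set B := f (s * (t * x)) / f (t * x)
    set C := f (t * x) / f x
    -- |g(st) - g s g t| ≤ |g(st) - A| + |B - g s| * |C| + |g s| * |C - g t|
    have hCb : |C| ≤ g t + δ := by
      have := abs_sub_abs_le_abs_sub C (g t)
      have hgt : |g t| = g t := abs_of_pos (hgpos t ht)
      rw [hgt] at this
      linarith [le_of_lt hB]
    have hgs : |g s| = g s := abs_of_pos (hgpos s hs)
    have h1 : |g (s * t) - g s * g t| ≤ |g (s * t) - A| + |A - g s * g t| :=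
      abs_sub_le _ _ _
    have h2 : |A - g s * g t| = |(B - g s) * C + g s * (C - g t)| := by
      rw [hfactor]; ring_nf
    have h3 : |(B - g s) * C + g s * (C - g t)| ≤ |B - g s| * |C| + |g s| * |C - g t| := by
      calc _ ≤ |(B - g s) * C| + |g s * (C - g t)| := abs_add_le _ _
        _ = |B - g s| * |C| + |g s| * |C - g t| := by rw [abs_mul, abs_mul]
    have habs : |g (s * t) - A| = |A - g (s * t)| := abs_sub_comm _ _
    have hbound : |g (s * t) - g s * g t| ≤ δ + δ * (g t + δ) + g s * δ := by
      have hBs : |B - g s| ≤ δ := le_of_lt hC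
      have hCt : |C - g t| ≤ δ := le_of_lt hB
      have hAd : |g (s * t) - A| ≤ δ := by rw [habs]; exact le_of_lt hA
      have : |B - g s| * |C| ≤ δ * (g t + δ) :=
        mul_le_mul hBs hCb (abs_nonneg _) (le_of_lt hδ)
      have h4 : |g s| * |C - g t| ≤ g s * δ := by
        rw [hgs]; exact mul_le_mul_of_nonneg_left hCt (le_of_lt (hgpos s hs))
      linarith [h1, h2 ▸ h3]
    have : δ + δ * (g t + δ) + g s * δ ≤ δ * (3 + g s + g t) := by nlinarith
    have hfin : δ * (3 + g s + g t) ≤ ε := (le_div_iff₀ hden).mp hδ2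
    linarith
  have : |g (s * t) - g s * g t| ≤ 0 := by
    refine le_of_forall_pos_le_add fun ε hε => ?_
    simpa using key ε hε
  have := abs_nonneg (g (s * t) - g s * g t)
  have h0 : |g (s * t) - g s * g t| = 0 := le_antisymm ‹_› ‹_›
  have := abs_eq_zero.mp h0
  linarith
end

section
/- Let η : ℝ → ℝ be continuous, satisfy the Gołąb–Schinzel equation η(s + t·η(s)) = η(s)η(t) for all s, t ∈ ℝ, and take only positive values on (0,∞) with η not identically 1 on (0,∞). Then there is ρ > 0 with η(t) = 1 + ρt for all t > −1/ρ. -/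
theorem GS_continuous_positive_solutions (η : ℝ → ℝ)
    (hcont : Continuous η)
    (hGS : ∀ s t : ℝ, η (s + t * η s) = η s * η t)
    (hpos : ∀ t > (0:ℝ), 0 < η t)
    (hnontriv : ¬ ∀ t > (0:ℝ), η t = 1) :
    ∃ ρ > (0:ℝ), ∀ t > -(1/ρ), η t = 1 + ρ * t := by
  -- η 0 = 1
  have h0 : η 0 = 1 := by
    have h := hGS 1 0
    simp at h
    have h1 : (0:ℝ) < η 1 := hpos 1 one_pos
    have h' : η 1 * η 0 = η 1 * 1 := by rw [mul_one, ← h]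
    exact mul_left_cancel₀ h1.ne' h'
  -- there is a zero of η
  push_neg at hnontriv
  obtain ⟨a, ha, hane⟩ := hnontriv
  have hc1 : (1 : ℝ) - η a ≠ 0 := sub_ne_zero.mpr (Ne.symm hane)
  set p := a / (1 - η a) with hp
  have hpc : a + p * η a = p := by
    rw [hp]
    field_simp
    ring
  have hηp : η p = 0 := by
    have h := hGS a p
    rw [hpc] at h
    have h2 : η p * (1 - η a) = 0 := by linear_combination h
    exact (mul_eq_zero.mp h2).resolve_right hc1
  -- the zero set and its supremum
  set Z : Set ℝ := {x | η x = 0} with hZ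
  have hZne : Z.Nonempty := ⟨p, hηp⟩
  have hZub : ∀ x ∈ Z, x ≤ (0:ℝ) := fun x hx =>
    le_of_not_gt fun h => (hpos x h).ne' hx
  have hZbdd : BddAbove Z := ⟨0, fun x hx => hZub x hx⟩
  have hZclosed : IsClosed Z := isClosed_singleton.preimage hcont
  set q := sSup Z with hq
  have hηq : η q = 0 := hZclosed.csSup_mem hZne hZbdd
  have hqle : q ≤ 0 := csSup_le hZne hZub
  have hqneg : q < 0 := lt_of_le_of_ne hqle (by
    intro h
    rw [h, h0] at hηq
    exact one_ne_zero hηq)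
  have hmem_le : ∀ x : ℝ, η x = 0 → x ≤ q := fun x hx => le_csSup hZbdd hx
  -- lower bound relation: s + q * η s ≤ q for all s
  have hlb : ∀ s : ℝ, s + q * η s ≤ q := by
    intro s
    refine hmem_le _ ?_
    have h := hGS s q
    rw [hηq, mul_zero] at h
    exact h
  -- key identity: if η s > 0 then q * η s = q - s
  have key : ∀ s : ℝ, 0 < η s → q * η s = q - s := by
    intro s hs
    have h1 : s + q * η s ≤ q := hlb s
    have hx0 : η ((q - s) / η s) = 0 := by
      have h := hGS s ((q - s) / η s)
      rw [div_mul_cancel₀ _ hs.ne'] at h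
      have he : s + (q - s) = q := by ring
      rw [he, hηq] at h
      exact (mul_eq_zero.mp h.symm).resolve_left hs.ne'
    have h2 : (q - s) / η s ≤ q := hmem_le _ hx0
    rw [div_le_iff₀ hs] at h2
    nlinarith [h1, h2]
  -- conclusion
  refine ⟨-1 / q, by show (0:ℝ) < -1 / q; rw [div_pos_iff]; right; constructor <;> linarith, ?_⟩
  have hqne : q ≠ 0 := hqneg.ne
  have hqeq : -(1 / (-1 / q)) = q := by field_simp
  rw [hqeq]
  intro t ht
  have hpost : 0 < η t := by
    by_contra h
    push_neg at h
    nlinarith [hlb t, mul_nonneg (neg_nonneg.mpr hqneg.le) (neg_nonneg.mpr h)]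
  have hk := key t hpost
  have : q * η t = q * (1 + -1 / q * t) := by
    rw [hk]
    field_simp
    ring
  exact mul_left_cancel₀ hqne this
end

section
/- Let B ⊆ ℝ be a Baire non-meagre set. Then there exists ε > 0 such that for every s with |s| < ε, the set B ∩ (B − s) is non-meagre. -/
open Filter Topology Metric Set

theorem kemperman_displacement_additive (B : Set ℝ)
    (hB : BaireMeasurableSet B) (hBnm : ¬ IsMeagre B) :
    ∃ ε > (0:ℝ), ∀ s : ℝ, |s| < ε →
      ¬ IsMeagre (B ∩ {x : ℝ | x + s ∈ B}) := by
  obtain ⟨U, hUo, hBU⟩ := hB.residualEq_isOpen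
  -- U is nonempty
  have hUne : U.Nonempty := by
    by_contra h
    rw [Set.not_nonempty_iff_eq_empty] at h
    subst h
    apply hBnm
    rw [IsMeagre]
    filter_upwards [hBU] with y hy
    intro hyB
    exact (hy ▸ hyB : (∅ : Set ℝ) y)
  obtain ⟨x, hxU⟩ := hUne
  obtain ⟨r, hr, hball⟩ := Metric.isOpen_iff.mp hUo x hxU
  refine ⟨r, hr, fun s hs hmeag => ?_⟩
  -- translate equivalence
  have h2 : {x : ℝ | x + s ∈ B} =ᵇ {x : ℝ | x + s ∈ U} := by
    have ht : Tendsto (fun x : ℝ => x + s) (residual ℝ) (residual ℝ) :=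
      tendsto_residual_of_isOpenMap (continuous_add_right s)
        (Homeomorph.addRight s).isOpenMap
    exact ht hBU
  -- the set of points where all equivalences hold and not in B ∩ (B - s) is residual
  have hres : {y : ℝ | y ∈ B ↔ y ∈ U} ∩ {y : ℝ | (y + s ∈ B) ↔ (y + s ∈ U)}
      ∩ (B ∩ {x : ℝ | x + s ∈ B})ᶜ ∈ residual ℝ := by
    have e1 : {y : ℝ | y ∈ B ↔ y ∈ U} ∈ residual ℝ := by
      filter_upwards [hBU] with y hy
      exact Iff.of_eq hy
    have e2 : {y : ℝ | (y + s ∈ B) ↔ (y + s ∈ U)} ∈ residual ℝ := by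
      filter_upwards [h2] with y hy
      exact Iff.of_eq hy
    exact Filter.inter_mem (Filter.inter_mem e1 e2) hmeag
  have hdense := dense_of_mem_residual hres
  obtain ⟨z, hz1, hz2⟩ := hdense.exists_mem_open
    (Metric.isOpen_ball (x := x - s / 2) (ε := (r - |s|) / 2))
    (Metric.nonempty_ball.mpr (by linarith : (0:ℝ) < (r - |s|) / 2))
  obtain ⟨⟨hzB, hzBs⟩, hzc⟩ := hz1
  rw [Metric.mem_ball, Real.dist_eq] at hz2
  have habs : |s| ≥ 0 := abs_nonneg s
  have hz_ball : z ∈ Metric.ball x r := by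
    rw [Metric.mem_ball, Real.dist_eq]
    have h1 : |z - x| ≤ |z - (x - s/2)| + |s/2| := by
      calc |z - x| = |(z - (x - s/2)) + (-(s/2))| := by ring_nf
        _ ≤ |z - (x - s/2)| + |(-(s/2))| := abs_add_le _ _
        _ = |z - (x - s/2)| + |s/2| := by rw [abs_neg]
    rw [abs_div, abs_two] at h1
    linarith
  have hzs_ball : z + s ∈ Metric.ball x r := by
    rw [Metric.mem_ball, Real.dist_eq]
    have h1 : |z + s - x| ≤ |z - (x - s/2)| + |s/2| := by
      calc |z + s - x| = |(z - (x - s/2)) + s/2| := by ring_nf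
        _ ≤ |z - (x - s/2)| + |s/2| := abs_add_le _ _
    rw [abs_div, abs_two] at h1
    linarith
  exact hzc ⟨hzB.mpr (hball hz_ball), hzBs.mpr (hball hzs_ball)⟩
end

section
/- Let I ⊆ (0,∞) be an open interval, M ⊆ ℝ a meagre set, B = I \ M, and let g : B → (0,∞) be continuous on B. Suppose g satisfies the restricted Cauchy equation: for every s > 0 with B ∩ s^{-1}B non-meagre, there is a meagre set M(s) such that g(sλ) = s^κ g(λ) for all λ ∈ (B ∩ s^{-1}B) \ M(s). Then there exist λ₀ ∈ B and a constant c = g(λ₀)/λ₀^κ such that g(λ) = c·λ^κ for all λ ∈ B. -/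
open Topology

private lemma isMeagre_union {X : Type*} [TopologicalSpace X] {s t : Set X}
    (hs : IsMeagre s) (ht : IsMeagre t) : IsMeagre (s ∪ t) := by
  rw [IsMeagre, Set.compl_union]
  exact Filter.inter_mem hs ht

private lemma not_isMeagre_of_isOpen' {X : Type*} [TopologicalSpace X] [BaireSpace X]
    {U : Set X} (hU : IsOpen U) (hne : U.Nonempty) : ¬ IsMeagre U := by
  intro h
  obtain ⟨y, hy1, hy2⟩ := (dense_of_mem_residual h).inter_open_nonempty U hU hne
  exact hy2 hy1

theorem resCFE_constancy (I M B : Set ℝ) (κ : ℝ) (g : ℝ → ℝ)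
    (hIopen : IsOpen I) (hIconn : I.OrdConnected) (hIpos : I ⊆ Set.Ioi 0)
    (hIne : I.Nonempty)
    (hM : IsMeagre M) (hB : B = I \ M)
    (hgpos : ∀ x ∈ B, 0 < g x)
    (hgcont : ContinuousOn g B)
    (hres : ∀ s > (0:ℝ), ¬ IsMeagre (B ∩ {x : ℝ | s * x ∈ B}) →
      ∃ Ms : Set ℝ, IsMeagre Ms ∧
        ∀ l ∈ (B ∩ {x : ℝ | s * x ∈ B}) \ Ms, g (s * l) = s ^ κ * g l) :
    ∃ l₀ ∈ B, ∀ l ∈ B, g l = (g l₀ / l₀ ^ κ) * l ^ κ := by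
  subst hB
  -- B is nonempty
  obtain ⟨l₀, hl₀⟩ : (I \ M).Nonempty := by
    obtain ⟨y, hy1, hy2⟩ := (dense_of_mem_residual hM).inter_open_nonempty I hIopen hIne
    exact ⟨y, hy1, hy2⟩
  refine ⟨l₀, hl₀, ?_⟩
  have key : ∀ a ∈ I \ M, ∀ b ∈ I \ M, g b = (b / a) ^ κ * g a := by
    intro a ha b hb
    have hapos : 0 < a := hIpos ha.1
    have hbpos : 0 < b := hIpos hb.1
    set s := b / a with hs
    have hspos : 0 < s := div_pos hbpos hapos
    have hsa : s * a = b := div_mul_cancel₀ b hapos.ne'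
    have hmc : Continuous (fun x : ℝ => s * x) := continuous_const.mul continuous_id
    have hmo : IsOpenMap (fun x : ℝ => s * x) := (Homeomorph.mulLeft₀ s hspos.ne').isOpenMap
    set U := I ∩ {x : ℝ | s * x ∈ I} with hU
    have hUopen : IsOpen U := hIopen.inter (hIopen.preimage hmc)
    have haU : a ∈ U := ⟨ha.1, by simpa [hsa] using hb.1⟩
    have hMs' : IsMeagre {x : ℝ | s * x ∈ M} := hM.preimage_of_isOpenMap hmc hmo
    set N : Set ℝ := M ∪ {x : ℝ | s * x ∈ M} with hN
    have hNm : IsMeagre N := isMeagre_union hM hMs'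
    have hsub : U \ N ⊆ (I \ M) ∩ {x : ℝ | s * x ∈ I \ M} := by
      rintro x ⟨⟨hx1, hx2⟩, hx3⟩
      exact ⟨⟨hx1, fun h => hx3 (Or.inl h)⟩, hx2, fun h => hx3 (Or.inr h)⟩
    have hnm : ¬ IsMeagre ((I \ M) ∩ {x : ℝ | s * x ∈ I \ M}) := by
      intro hmea
      refine not_isMeagre_of_isOpen' hUopen ⟨a, haU⟩ ?_
      refine (isMeagre_union hmea hNm).mono ?_
      intro x hx
      by_cases h : x ∈ N
      · exact Or.inr h
      · exact Or.inl (hsub ⟨hx, h⟩)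
    obtain ⟨Ms, hMsm, hMs⟩ := hres s hspos hnm
    set D : Set ℝ := U \ (N ∪ Ms) with hD
    have hDB : D ⊆ I \ M := fun x hx =>
      ⟨hx.1.1, fun h => hx.2 (Or.inl (Or.inl h))⟩
    have hDsB : ∀ x ∈ D, s * x ∈ I \ M := fun x hx =>
      ⟨hx.1.2, fun h => hx.2 (Or.inl (Or.inr h))⟩
    have hDcl : a ∈ closure D := by
      have hdense : Dense ((N ∪ Ms)ᶜ) :=
        dense_of_mem_residual (isMeagre_union hNm hMsm)
      have := hdense.open_subset_closure_inter hUopen haU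
      rwa [← Set.diff_eq] at this
    haveI : (𝓝[D] a).NeBot := mem_closure_iff_nhdsWithin_neBot.mp hDcl
    have t1 : Filter.Tendsto g (𝓝[D] a) (𝓝 (g a)) :=
      (hgcont a ha).mono_left (nhdsWithin_mono a hDB)
    have hmt : Filter.Tendsto (fun x => s * x) (𝓝[D] a) (𝓝[I \ M] b) := by
      rw [← hsa]
      refine tendsto_nhdsWithin_of_tendsto_nhds_of_eventually_within _
        ((hmc.tendsto a).mono_left nhdsWithin_le_nhds) ?_
      exact eventually_nhdsWithin_of_forall hDsB
    have t2 : Filter.Tendsto (fun x => g (s * x)) (𝓝[D] a) (𝓝 (g b)) :=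
      Filter.Tendsto.comp (hgcont b hb) hmt
    have t3 : Filter.Tendsto (fun x => s ^ κ * g x) (𝓝[D] a) (𝓝 (g b)) := by
      refine t2.congr' ?_
      refine eventually_nhdsWithin_of_forall fun x hx => ?_
      exact hMs x ⟨⟨hDB hx, hDsB x hx⟩, fun h => hx.2 (Or.inr h)⟩
    have t4 : Filter.Tendsto (fun x => s ^ κ * g x) (𝓝[D] a) (𝓝 (s ^ κ * g a)) :=
      t1.const_mul _
    exact (tendsto_nhds_unique t3 t4).symm ▸ rfl
  intro l hl
  have hlpos : 0 < l := hIpos hl.1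
  have hl₀pos : 0 < l₀ := hIpos hl₀.1
  have := key l₀ hl₀ l hl
  rw [Real.div_rpow hlpos.le hl₀pos.le] at this
  rw [this]
  field_simp
end

section
/- Let η(t) = 1 + ρt with ρ ≥ 0, and suppose K : G_η → (0,∞) is a function satisfying K(u ∘_η v) = K(u)K(v) for all u, v in an interval J around 0, and the set {s : K(s) is defined and the equation holds with all w ∈ G_η} contains J. If K is Baire and locally bounded near 0, then K is continuous on G_η and K(t) = (1+ρt)^{κ/ρ} for some κ when ρ > 0 (and K(t) = e^{κt} when ρ = 0). -/
/-- An additive function `ℝ → ℝ` bounded above near `0` is linear. -/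
lemma cauchy_linear (f : ℝ →+ ℝ) {δ C : ℝ} (hδ : 0 < δ)
    (hb : ∀ x : ℝ, |x| < δ → f x ≤ C) : ∀ x : ℝ, f x = f 1 * x := by
  set a : ℝ := f 1 with ha
  have hrat : ∀ q : ℚ, f (q : ℝ) = a * q := by
    intro q
    have h2 := map_ratCast_smul f ℝ ℝ q (1 : ℝ)
    simp only [smul_eq_mul, mul_one] at h2
    rw [h2, ha]; ring
  set g : ℝ → ℝ := fun x => f x - a * x with hg
  have gadd : ∀ x y : ℝ, g (x + y) = g x + g y := by
    intro x y; simp only [hg, map_add]; ring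
  have grat : ∀ (x : ℝ) (q : ℚ), g (x + q) = g x := by
    intro x q; rw [gadd]; simp [hg, hrat]
  have gub : ∀ y : ℝ, g y ≤ C + |a| * δ := by
    intro y
    obtain ⟨q, hq⟩ := exists_rat_near y hδ
    have h1 : g y = g (y - q) := by
      have := grat (y - q) q
      simpa using this
    have h2 : f (y - q) ≤ C := hb _ hq
    have h3 : -(a * (y - q)) ≤ |a| * δ := by
      calc -(a * (y - q)) ≤ |a * (y - q)| := neg_le_abs _
        _ = |a| * |y - q| := abs_mul _ _
        _ ≤ |a| * δ := mul_le_mul_of_nonneg_left hq.le (abs_nonneg a)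
    have : g (y - q) ≤ C + |a| * δ := by
      simp only [hg]; linarith
    linarith [h1 ▸ this]
  have gzero : g 0 = 0 := by simp [hg]
  have gneg : ∀ x : ℝ, g (-x) = -g x := by
    intro x
    have := gadd x (-x); simp [gzero] at this; linarith
  have gnsmul : ∀ (n : ℕ) (x : ℝ), g (n * x) = n * g x := by
    intro n x
    induction n with
    | zero => simp [gzero]
    | succ n ih =>
      have : ((n : ℝ) + 1) * x = (n : ℝ) * x + x := by ring
      push_cast
      rw [this, gadd, ih]; ring
  have gle : ∀ x : ℝ, g x ≤ 0 := by
    intro x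
    by_contra h
    push_neg at h
    obtain ⟨n, hn⟩ := exists_nat_gt ((C + |a| * δ) / g x)
    have hn' : C + |a| * δ < n * g x := by
      rw [div_lt_iff₀ h] at hn; linarith
    have := gub ((n : ℝ) * x)
    rw [gnsmul] at this
    linarith
  intro x
  have h1 := gle x
  have h2 := gle (-x)
  rw [gneg] at h2
  have : g x = 0 := le_antisymm h1 (by linarith)
  simp only [hg] at this
  linarith

theorem CJ_solution (ρ : ℝ) (hρ : 0 ≤ ρ) (K : ℝ → ℝ)
    (G : Set ℝ) (hG : G = {t : ℝ | 0 < 1 + ρ * t})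
    (hKpos : ∀ t ∈ G, 0 < K t)
    (heq : ∀ u ∈ G, ∀ v ∈ G, K (u + v * (1 + ρ * u)) = K u * K v)
    (hBaire : ∀ U : Set ℝ, IsOpen U → BaireMeasurableSet (K ⁻¹' U))
    (hlocbdd : ∃ δ > (0:ℝ), ∃ C : ℝ, ∀ t : ℝ, |t| < δ → K t ≤ C) :
    ContinuousOn K G ∧
      ∃ κ : ℝ, (0 < ρ → ∀ t ∈ G, K t = (1 + ρ * t) ^ (κ / ρ)) ∧
        (ρ = 0 → ∀ t : ℝ, K t = Real.exp (κ * t)) := by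
  obtain ⟨δ, hδ, C, hC⟩ := hlocbdd
  rcases hρ.lt_or_eq with hρ' | hρ'
  · -- case 0 < ρ
    have hmem : ∀ x : ℝ, (Real.exp x - 1) / ρ ∈ G := by
      intro x
      rw [hG]
      show 0 < 1 + ρ * ((Real.exp x - 1) / ρ)
      have : 1 + ρ * ((Real.exp x - 1) / ρ) = Real.exp x := by
        field_simp
        ring
      rw [this]; exact Real.exp_pos x
    have harg : ∀ x y : ℝ,
        (Real.exp x - 1) / ρ + ((Real.exp y - 1) / ρ) * (1 + ρ * ((Real.exp x - 1) / ρ))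
          = (Real.exp (x + y) - 1) / ρ := by
      intro x y
      rw [Real.exp_add]
      field_simp
      ring
    have hKadd : ∀ x y : ℝ,
        K ((Real.exp (x + y) - 1) / ρ) = K ((Real.exp x - 1) / ρ) * K ((Real.exp y - 1) / ρ) := by
      intro x y
      rw [← harg]
      exact heq _ (hmem x) _ (hmem y)
    have h0G : (0:ℝ) ∈ G := by rw [hG]; show (0:ℝ) < 1 + ρ * 0; simp
    have hK0 : K 0 = 1 := by
      have h := heq 0 h0G 0 h0G
      simp at h
      have := hKpos 0 h0G
      nlinarith
    have harg0 : (Real.exp 0 - 1) / ρ = 0 := by simp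
    set F : ℝ →+ ℝ :=
      { toFun := fun x => Real.log (K ((Real.exp x - 1) / ρ))
        map_zero' := by
          show Real.log (K ((Real.exp 0 - 1) / ρ)) = 0
          rw [harg0, hK0, Real.log_one]
        map_add' := by
          intro x y
          rw [hKadd x y, Real.log_mul (hKpos _ (hmem x)).ne' (hKpos _ (hmem y)).ne'] } with hF
    -- local bound for F
    have hC0 : 0 < C := lt_of_lt_of_le (hKpos 0 h0G) (hC 0 (by simpa using hδ))
    have hδ' : 0 < min 1 (ρ * δ / 2) := lt_min one_pos (by positivity)
    have hFb : ∀ x : ℝ, |x| < min 1 (ρ * δ / 2) → F x ≤ Real.log C := by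
      intro x hx
      have hx1 : |x| ≤ 1 := le_of_lt (lt_of_lt_of_le hx (min_le_left _ _))
      have hx2 : |x| < ρ * δ / 2 := lt_of_lt_of_le hx (min_le_right _ _)
      have hbound : |(Real.exp x - 1) / ρ| < δ := by
        rw [abs_div, abs_of_pos hρ', div_lt_iff₀ hρ']
        calc |Real.exp x - 1| ≤ 2 * |x| := Real.abs_exp_sub_one_le hx1
          _ < 2 * (ρ * δ / 2) := by linarith
          _ = δ * ρ := by ring
      exact Real.log_le_log (hKpos _ (hmem x)) (hC _ hbound)
    have hFlin := cauchy_linear F hδ' hFb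
    set κ' : ℝ := F 1 with hκ'
    have hKval : ∀ t ∈ G, K t = (1 + ρ * t) ^ (κ' : ℝ) := by
      intro t ht
      rw [hG] at ht
      have htpos : 0 < 1 + ρ * t := ht
      have hxt : (Real.exp (Real.log (1 + ρ * t)) - 1) / ρ = t := by
        rw [Real.exp_log htpos]
        field_simp
        ring
      have h1 : Real.log (K t) = κ' * Real.log (1 + ρ * t) := by
        have := hFlin (Real.log (1 + ρ * t))
        simp only [hF, AddMonoidHom.coe_mk, ZeroHom.coe_mk] at this
        rw [hxt] at this
        exact this
      have h2 : K t = Real.exp (κ' * Real.log (1 + ρ * t)) := by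
        rw [← h1, Real.exp_log (hKpos t (by rw [hG]; exact ht))]
      rw [h2, Real.rpow_def_of_pos htpos]
      ring_nf
    refine ⟨?_, κ' * ρ, ?_, ?_⟩
    · have hcont : ContinuousOn (fun t => (1 + ρ * t) ^ (κ' : ℝ)) G := by
        apply ContinuousOn.rpow_const
        · exact (continuous_const.add (continuous_const.mul continuous_id)).continuousOn
        · intro t ht
          left
          rw [hG] at ht
          exact ne_of_gt ht
      exact hcont.congr hKval
    · intro _ t ht
      rw [hKval t ht]
      congr 1
      field_simp
    · intro h0; exact absurd h0 (ne_of_gt hρ').elim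
  · -- case ρ = 0
    subst hρ'
    have hGu : G = Set.univ := by rw [hG]; ext t; simp
    have hmem : ∀ t : ℝ, t ∈ G := by rw [hGu]; intro t; trivial
    have hKadd : ∀ u v : ℝ, K (u + v) = K u * K v := by
      intro u v
      have := heq u (hmem u) v (hmem v)
      simpa using this
    have hK0 : K 0 = 1 := by
      have h := hKadd 0 0
      simp at h
      have := hKpos 0 (hmem 0)
      nlinarith
    set F : ℝ →+ ℝ :=
      { toFun := fun x => Real.log (K x)
        map_zero' := by
          show Real.log (K 0) = 0
          rw [hK0, Real.log_one]
        map_add' := by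
          intro x y
          rw [hKadd x y, Real.log_mul (hKpos _ (hmem x)).ne' (hKpos _ (hmem y)).ne'] } with hF
    have hFb : ∀ x : ℝ, |x| < δ → F x ≤ Real.log C := fun x hx =>
      Real.log_le_log (hKpos _ (hmem x)) (hC _ hx)
    have hFlin := cauchy_linear F hδ hFb
    set κ : ℝ := F 1 with hκ
    have hKval : ∀ t : ℝ, K t = Real.exp (κ * t) := by
      intro t
      have h1 : Real.log (K t) = κ * t := hFlin t
      rw [← h1, Real.exp_log (hKpos t (hmem t))]
    refine ⟨?_, κ, ?_, fun _ => hKval⟩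
    · have : ContinuousOn (fun t => Real.exp (κ * t)) G :=
        (Real.continuous_exp.comp (continuous_const.mul continuous_id)).continuousOn
      exact this.congr fun t _ => hKval t
    · intro h; exact absurd h (lt_irrefl 0)
end
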